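/- Let σ ∈ Σ_{n_0} and suppose ξ ∈ (0,1] satisfies a/K = |χ^σ(ξ)|. Then the point v^σ ∈ 𝕋^{2n_0} defined by v_i^σ = φ_i if σ_i = 1, v_i^σ = π − φ_i if σ_i = −1 and φ_i > 0, v_i^σ = −φ_i − π if σ_i = −1 and φ_i < 0, where φ_i = ±arcsin((i−n_0−1)ξ/n_0) for i ≤ n_0 and φ_i = ±arcsin((i−n_0)ξ/n_0) for n_0 < i ≤ 2n_0 (the upper sign if χ^σ(ξ) > 0 and the lower sign otherwise), is an equilibrium of the reduced Kuramoto system. -/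

import Mathlib

open Real Set Filter

/-- coefficient of the natural frequency of the `i`-th oscillator (0-indexed) in the reduced system:
`i - n0` for `i < n0` (paper's `i - n0 - 1`, 1-indexed) and `i - n0 + 1` otherwise. -/
noncomputable def redCoeff (n0 : ℕ) (i : Fin (2 * n0)) : ℝ :=
  if (i : ℕ) < n0 then (i : ℕ) - (n0 : ℝ) else (i : ℕ) - (n0 : ℝ) + 1

/-- right-hand side of the reduced Kuramoto system on `𝕋^{2 n0}` (with `n = 2 n0 + 1`, `ν = a/n`). -/
noncomputable def redField (n0 : ℕ) (a K : ℝ) (v : Fin (2 * n0) → ℝ) (i : Fin (2 * n0)) : ℝ :=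
  redCoeff n0 i * (a / (2 * (n0 : ℝ) + 1)) -
    (K / (2 * (n0 : ℝ) + 1)) *
      (2 * Real.sin (v i) +
        ∑ j ∈ Finset.univ.erase i, (Real.sin (v j) - Real.sin (v j - v i)))

/-- the function `χ^σ`. -/
noncomputable def chi (n0 : ℕ) (σ : Fin (2 * n0) → ℝ) (ξ : ℝ) : ℝ :=
  (ξ / n0) * (1 + ∑ i, σ i * Real.sqrt (1 - (redCoeff n0 i * ξ / n0) ^ 2))

/-- the function `h^σ`. -/
noncomputable def hSigma (n0 : ℕ) (σ : Fin (2 * n0) → ℝ) (ξ : ℝ) : ℝ :=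
  (1 / n0) * ∑ i, σ i * (redCoeff n0 i / n0) ^ 2 /
    Real.sqrt (1 - (redCoeff n0 i * ξ / n0) ^ 2)

/-- the consistency equation for `Ĉ^σ`. -/
def ConsistentC (n0 : ℕ) (a K : ℝ) (σ : Fin (2 * n0) → ℝ) (C : ℝ) : Prop :=
  C ≠ 0 ∧
  (∀ i, |redCoeff n0 i * a / ((2 * (n0 : ℝ) + 1) * K * C)| ≤ 1) ∧
  C = (1 / (2 * (n0 : ℝ) + 1)) *
    (1 + ∑ i, σ i * Real.sqrt (1 - (redCoeff n0 i * a / ((2 * (n0 : ℝ) + 1) * K * C)) ^ 2))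

/-- the angles `φ_i = arcsin((i−n0−1)a/(nKĈ))` resp. `arcsin((i−n0)a/(nKĈ))`. -/
noncomputable def phiC (n0 : ℕ) (a K C : ℝ) (i : Fin (2 * n0)) : ℝ :=
  Real.arcsin (redCoeff n0 i * a / ((2 * (n0 : ℝ) + 1) * K * C))

/-- the angles `φ_i = ± ξ`-parametrized version. -/
noncomputable def phiXi (n0 : ℕ) (s ξ : ℝ) (i : Fin (2 * n0)) : ℝ :=
  s * Real.arcsin (redCoeff n0 i * ξ / n0)

/-- the point `v^σ` built from signs `σ` and angles `φ`. -/
noncomputable def vSigma (n0 : ℕ) (σ : Fin (2 * n0) → ℝ) (φ : Fin (2 * n0) → ℝ)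
    (i : Fin (2 * n0)) : ℝ :=
  if σ i = 1 then φ i else if 0 < φ i then π - φ i else -φ i - π

/-- `v` is a solution of the reduced Kuramoto system. -/
def IsRedSol (n0 : ℕ) (a K : ℝ) (v : ℝ → Fin (2 * n0) → ℝ) : Prop :=
  ∀ t : ℝ, ∀ i, HasDerivAt (fun s => v s i) (redField n0 a K (v t) i) t

/-- Lyapunov stability of an equilibrium of the reduced Kuramoto system. -/
def RedStable (n0 : ℕ) (a K : ℝ) (vstar : Fin (2 * n0) → ℝ) : Prop :=
  ∀ ε > 0, ∃ δ > 0, ∀ v : ℝ → Fin (2 * n0) → ℝ, IsRedSol n0 a K v →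
    dist (v 0) vstar < δ → ∀ t ≥ 0, dist (v t) vstar < ε

/-- asymptotic stability of an equilibrium of the reduced Kuramoto system. -/
def RedAsympStable (n0 : ℕ) (a K : ℝ) (vstar : Fin (2 * n0) → ℝ) : Prop :=
  RedStable n0 a K vstar ∧
  ∃ δ > 0, ∀ v : ℝ → Fin (2 * n0) → ℝ, IsRedSol n0 a K v →
    dist (v 0) vstar < δ → Tendsto (fun t => v t) atTop (nhds vstar)


lemma key_sq (m : ℕ) : ∑ k ∈ Finset.range m, ((2:ℝ) * k + 1) = m ^ 2 := by
  induction m with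
  | zero => simp
  | succ p ih => rw [Finset.sum_range_succ, ih]; push_cast; ring

lemma abs_redCoeff_le (n0 : ℕ) (i : Fin (2 * n0)) : |redCoeff n0 i| ≤ n0 := by
  have h2 : (i : ℕ) < 2 * n0 := i.isLt
  unfold redCoeff
  split_ifs with h
  · have h1 : ((i:ℕ) : ℝ) < n0 := by exact_mod_cast h
    have h0 : (0:ℝ) ≤ ((i:ℕ) : ℝ) := Nat.cast_nonneg _
    rw [abs_le]; constructor <;> linarith
  · have h1 : ((i:ℕ) : ℝ) < 2 * n0 := by exact_mod_cast h2
    have h0 : (n0:ℝ) ≤ ((i:ℕ) : ℝ) := by exact_mod_cast not_lt.mp h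
    have h3 : ((i:ℕ) : ℝ) + 1 ≤ 2 * n0 := by exact_mod_cast h2
    rw [abs_le]; constructor <;> linarith

lemma sum_redCoeff (n0 : ℕ) : ∑ i : Fin (2 * n0), redCoeff n0 i = 0 := by
  have hg : ∑ i : Fin (2 * n0), redCoeff n0 i
      = ∑ m ∈ Finset.range (2 * n0),
          (if m < n0 then (m : ℝ) - n0 else (m : ℝ) - n0 + 1) := by
    have h0 : ∑ i : Fin (2 * n0), redCoeff n0 i
        = ∑ i : Fin (2 * n0),
            (fun m => if m < n0 then (m : ℝ) - n0 else (m : ℝ) - n0 + 1) (i : ℕ) := rfl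
    rw [h0]
    exact Fin.sum_univ_eq_sum_range (fun m => if m < n0 then (m : ℝ) - n0 else (m : ℝ) - n0 + 1) (2 * n0)
  rw [hg, Finset.range_eq_Ico,
    ← Finset.sum_Ico_consecutive _ (Nat.zero_le n0) (by omega : n0 ≤ 2 * n0),
    Finset.sum_Ico_eq_sum_range, Finset.sum_Ico_eq_sum_range]
  simp only [Nat.sub_zero, Nat.zero_add, Nat.add_zero]
  have h2 : 2 * n0 - n0 = n0 := by omega
  rw [h2]
  have e1 : ∀ k ∈ Finset.range n0,
      (if k < n0 then ((k:ℕ):ℝ) - n0 else ((k:ℕ):ℝ) - n0 + 1) = (k:ℝ) - n0 := by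
    intro k hk
    rw [if_pos (Finset.mem_range.mp hk)]
  have e2 : ∀ k ∈ Finset.range n0,
      (if n0 + k < n0 then ((n0+k:ℕ):ℝ) - n0 else ((n0+k:ℕ):ℝ) - n0 + 1) = (k:ℝ) + 1 := by
    intro k hk; rw [if_neg (by omega)]; push_cast; ring
  rw [Finset.sum_congr rfl e1, Finset.sum_congr rfl e2, ← Finset.sum_add_distrib]
  have e3 : ∀ k ∈ Finset.range n0, ((k:ℝ) - n0 + ((k:ℝ) + 1)) = ((2:ℝ)*k + 1) - n0 :=
    fun k _ => by ring
  rw [Finset.sum_congr rfl e3, Finset.sum_sub_distrib, key_sq, Finset.sum_const,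
    Finset.card_range, nsmul_eq_mul]
  ring

lemma sin_vSigma (n0 : ℕ) (σ φ : Fin (2 * n0) → ℝ) (i : Fin (2 * n0)) :
    Real.sin (vSigma n0 σ φ i) = Real.sin (φ i) := by
  unfold vSigma
  split_ifs with h1 h2
  · rfl
  · exact Real.sin_pi_sub _
  · rw [show -φ i - π = -(φ i + π) by ring, Real.sin_neg, Real.sin_add_pi, neg_neg]

lemma cos_vSigma (n0 : ℕ) (σ φ : Fin (2 * n0) → ℝ) (i : Fin (2 * n0))
    (h : σ i = 1 ∨ σ i = -1) :
    Real.cos (vSigma n0 σ φ i) = σ i * Real.cos (φ i) := by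
  unfold vSigma
  split_ifs with h1 h2
  · rw [h1, one_mul]
  · rcases h with h | h
    · exact absurd h h1
    · rw [h, Real.cos_pi_sub]; ring
  · rcases h with h | h
    · exact absurd h h1
    · rw [h, show -φ i - π = -(φ i + π) by ring, Real.cos_neg, Real.cos_add_pi]; ring

lemma sin_phiXi (n0 : ℕ) (s ξ : ℝ) (i : Fin (2 * n0)) (hs : s = 1 ∨ s = -1)
    (hx : |redCoeff n0 i * ξ / n0| ≤ 1) :
    Real.sin (phiXi n0 s ξ i) = s * (redCoeff n0 i * ξ / n0) := by
  obtain ⟨h1, h2⟩ := abs_le.mp hx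
  rcases hs with h | h <;> simp [phiXi, h, Real.sin_arcsin h1 h2]

lemma cos_phiXi (n0 : ℕ) (s ξ : ℝ) (i : Fin (2 * n0)) (hs : s = 1 ∨ s = -1) :
    Real.cos (phiXi n0 s ξ i) = Real.sqrt (1 - (redCoeff n0 i * ξ / n0) ^ 2) := by
  rcases hs with h | h <;> simp [phiXi, h, Real.cos_arcsin]


/-- If `ξ ∈ (0,1]` satisfies `a/K = |χ^σ(ξ)|`, then the point `v^σ` built
from the angles `φ_i = ± arcsin((i−n_0−1)ξ/n_0)` resp. `± arcsin((i−n_0)ξ/n_0)`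
(upper sign if `χ^σ(ξ) > 0`, lower sign otherwise) is an equilibrium of the reduced
Kuramoto system. -/
theorem stmt9 (n0 : ℕ) (hn0 : 1 < n0) (a K : ℝ) (ha : 0 < a) (hK : 0 < K)
    (σ : Fin (2 * n0) → ℝ) (hσ : ∀ i, σ i = 1 ∨ σ i = -1)
    (ξ : ℝ) (hξ : ξ ∈ Set.Ioc (0:ℝ) 1)
    (hcon : a / K = |chi n0 σ ξ|) :
    ∀ i, redField n0 a K
      (vSigma n0 σ (phiXi n0 (if 0 < chi n0 σ ξ then 1 else -1) ξ)) i = 0 := by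
  intro i
  have hn0r : (0:ℝ) < n0 := by
    have : 0 < n0 := by omega
    exact_mod_cast this
  have hξ0 := hξ.1
  have hξ1 := hξ.2
  have hξne : ξ ≠ 0 := ne_of_gt hξ0
  have hn0ne : (n0:ℝ) ≠ 0 := ne_of_gt hn0r
  set c : ℝ := chi n0 σ ξ with hc
  set s : ℝ := if 0 < c then (1:ℝ) else -1 with hsdef
  have hs1 : s = 1 ∨ s = -1 := by rw [hsdef]; split_ifs <;> simp
  have hxb : ∀ j, |redCoeff n0 j * ξ / n0| ≤ 1 := by
    intro j
    rw [abs_div, abs_mul, abs_of_pos hξ0, abs_of_pos hn0r, div_le_one hn0r]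
    have h := abs_redCoeff_le n0 j
    nlinarith [abs_nonneg (redCoeff n0 j)]
  set φ := phiXi n0 s ξ with hφ
  set v := vSigma n0 σ φ with hvdef
  have hsin : ∀ j, Real.sin (v j) = s * (redCoeff n0 j * ξ / n0) := by
    intro j; rw [hvdef, sin_vSigma, hφ, sin_phiXi n0 s ξ j hs1 (hxb j)]
  have hcos : ∀ j, Real.cos (v j) = σ j * Real.sqrt (1 - (redCoeff n0 j * ξ / n0) ^ 2) := by
    intro j; rw [hvdef, cos_vSigma n0 σ φ j (hσ j), hφ, cos_phiXi n0 s ξ j hs1]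
  have hS : ∑ j, Real.sin (v j) = 0 := by
    calc ∑ j, Real.sin (v j) = ∑ j, s * (redCoeff n0 j * ξ / n0) :=
          Finset.sum_congr rfl (fun j _ => hsin j)
      _ = (s * ξ / n0) * ∑ j, redCoeff n0 j := by
          rw [Finset.mul_sum]; exact Finset.sum_congr rfl (fun j _ => by ring)
      _ = 0 := by rw [sum_redCoeff]; ring
  have hchi : c = (ξ / n0) * (1 + ∑ j, σ j * Real.sqrt (1 - (redCoeff n0 j * ξ / n0) ^ 2)) := hc
  have hCC : 1 + ∑ j, Real.cos (v j) = c * n0 / ξ := by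
    have hsum_cos : ∑ j, Real.cos (v j)
        = ∑ j, σ j * Real.sqrt (1 - (redCoeff n0 j * ξ / n0) ^ 2) :=
      Finset.sum_congr rfl (fun j _ => hcos j)
    rw [hsum_cos, hchi]; field_simp; congr 1; exact Finset.sum_congr rfl (fun x _ => by ring_nf)
  have hb : (2 * Real.sin (v i) + ∑ j ∈ Finset.univ.erase i, (Real.sin (v j) - Real.sin (v j - v i)))
      = Real.sin (v i) * (1 + ∑ j, Real.cos (v j)) := by
    have e : ∀ j ∈ Finset.univ.erase i, Real.sin (v j) - Real.sin (v j - v i)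
        = Real.sin (v j) - (Real.sin (v j) * Real.cos (v i) - Real.cos (v j) * Real.sin (v i)) :=
      fun j _ => by rw [Real.sin_sub]
    rw [Finset.sum_congr rfl e, Finset.sum_erase_eq_sub (Finset.mem_univ i),
      Finset.sum_sub_distrib, Finset.sum_sub_distrib, ← Finset.sum_mul, ← Finset.sum_mul, hS]
    ring
  have hsc : s * c = |c| := by
    rw [hsdef]; split_ifs with h
    · rw [one_mul, abs_of_pos h]
    · rw [neg_one_mul, abs_of_nonpos (not_lt.mp h)]
  have haK : a = |c| * K := (div_eq_iff (ne_of_gt hK)).mp hcon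
  unfold redField
  rw [hb, hCC, hsin i]
  have key : s * (redCoeff n0 i * ξ / n0) * (c * n0 / ξ) = redCoeff n0 i * |c| := by
    rw [← hsc]; field_simp
  rw [key, haK]
  ring
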